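/- If the third multirelation is union-closed, Peleg composition is associative: for any multirelations R ⊆ X × ℘(Y), S ⊆ Y × ℘(Z) and any union-closed T ⊆ Z × ℘(W), (R ∗ S) ∗ T = R ∗ (S ∗ T). -/

import Mathlib

open Set

/-- Ordinary relational composition. -/
def relComp {A B C : Type*} (R : Set (A × B)) (S : Set (B × C)) : Set (A × C) :=
  {p | ∃ b, (p.1, b) ∈ R ∧ (b, p.2) ∈ S}

/-- Kleisli composition of multirelations. -/
def kleisliComp {X Y Z : Type*} (R : Set (X × Set Y)) (S : Set (Y × Set Z)) :
    Set (X × Set Z) :=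
  {p | ∃ B, (p.1, B) ∈ R ∧ p.2 = ⋃₀ {C | ∃ b ∈ B, (b, C) ∈ S}}

/-- Kleisli lifting of a multirelation. -/
def kleisliLift {Y Z : Type*} (S : Set (Y × Set Z)) : Set (Set Y × Set Z) :=
  {p | p.2 = ⋃₀ {C | ∃ b ∈ p.1, (b, C) ∈ S}}

/-- Parikh lifting of a multirelation. -/
def parikhLift {Y Z : Type*} (S : Set (Y × Set Z)) : Set (Set Y × Set Z) :=
  {p | ∀ b ∈ p.1, (b, p.2) ∈ S}

/-- Parikh composition of multirelations. -/
def parikhComp {X Y Z : Type*} (R : Set (X × Set Y)) (S : Set (Y × Set Z)) :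
    Set (X × Set Z) :=
  {p | ∃ B, (p.1, B) ∈ R ∧ ∀ b ∈ B, (b, p.2) ∈ S}

/-- Peleg composition of multirelations. -/
def pelegComp {X Y Z : Type*} (R : Set (X × Set Y)) (S : Set (Y × Set Z)) :
    Set (X × Set Z) :=
  {p | ∃ B, (p.1, B) ∈ R ∧
    ∃ f : Y → Set Z, (∀ b ∈ B, (b, f b) ∈ S) ∧ p.2 = ⋃ b ∈ B, f b}

/-- Peleg lifting of a multirelation. -/
def pelegLift {Y Z : Type*} (S : Set (Y × Set Z)) : Set (Set Y × Set Z) :=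
  {p | ∃ f : Y → Set Z, (∀ b ∈ p.1, (b, f b) ∈ S) ∧ p.2 = ⋃ b ∈ p.1, f b}

/-- The singleton map 1_Y = {(y,{y})}. -/
def singletonMap (Y : Type*) : Set (Y × Set Y) := {p | p.2 = {p.1}}

/-- Converse of the membership relation: {(y,A) | y ∈ A}. -/
def memConv (Y : Type*) : Set (Y × Set Y) := {p | p.1 ∈ p.2}

/-- The inclusion relation Ξ on the powerset. -/
def inclRel (Z : Type*) : Set (Set Z × Set Z) := {p | p.1 ⊆ p.2}

/-- Up-closed multirelations. -/
def upClosed {X Y : Type*} (R : Set (X × Set Y)) : Prop :=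
  ∀ a B C, (a, B) ∈ R → B ⊆ C → (a, C) ∈ R

/-- Univalent relations (partial functions). -/
def isUnivalent {A B : Type*} (f : Set (A × B)) : Prop :=
  ∀ x y y', (x, y) ∈ f → (x, y') ∈ f → y = y'

/-- Domain of a relation. -/
def relDom {A B : Type*} (f : Set (A × B)) : Set A := {x | ∃ y, (x, y) ∈ f}

/-- Union-closed multirelations. -/
def unionClosed {Z W : Type*} (T : Set (Z × Set W)) : Prop :=
  ∀ z (𝔅 : Set (Set W)), 𝔅.Nonempty → (∀ B ∈ 𝔅, (z, B) ∈ T) → (z, ⋃₀ 𝔅) ∈ T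
/-
The inclusion `(R ∗ S) ∗ T ⊆ R ∗ (S ∗ T)` always holds: a witness on the left is regrouped
by sending each `b` to the union of the `T`-images of the points of `f b`. For the converse,
a point `c` reached from several `b ∈ B` receives a separate `T`-image from each of them;
union-closure of `T` lets us merge these into the single image that Peleg composition needs.
-/

theorem biUnion_biUnion_swap {Y Z W : Type*} (B : Set Y) (D : Y → Set Z)
    (g : Y → Z → Set W) :
    ⋃ b ∈ B, ⋃ c ∈ D b, g b c = ⋃ c ∈ ⋃ b ∈ B, D b, ⋃ b ∈ {b ∈ B | c ∈ D b}, g b c := by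
  ext w
  simp only [mem_iUnion, mem_sep_iff, exists_prop]
  constructor
  · rintro ⟨b, hb, c, hc, hw⟩
    exact ⟨c, ⟨b, hb, hc⟩, b, ⟨hb, hc⟩, hw⟩
  · rintro ⟨c, -, b, ⟨hb, hc⟩, hw⟩
    exact ⟨b, hb, c, hc, hw⟩

theorem unionClosed.biUnion_mem {Z W ι : Type*} {T : Set (Z × Set W)} (hT : unionClosed T)
    {z : Z} {s : Set ι} {F : ι → Set W} (hs : s.Nonempty) (hF : ∀ i ∈ s, (z, F i) ∈ T) :
    (z, ⋃ i ∈ s, F i) ∈ T := by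
  rw [← sUnion_image]
  exact hT z _ (hs.image F) (forall_mem_image.2 hF)

theorem pelegComp_pelegComp_subset {X Y Z W : Type*} (R : Set (X × Set Y))
    (S : Set (Y × Set Z)) (T : Set (Z × Set W)) :
    pelegComp (pelegComp R S) T ⊆ pelegComp R (pelegComp S T) := by
  rintro ⟨a, _⟩ ⟨_, ⟨B, hB, f, hf, rfl⟩, g, hg, rfl⟩
  refine ⟨B, hB, fun b => ⋃ c ∈ f b, g c, fun b hb => ?_, by simp only [biUnion_iUnion]⟩
  exact ⟨f b, hf b hb, g, fun c hc => hg c (mem_biUnion hb hc), rfl⟩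

theorem pelegComp_subset_pelegComp_pelegComp {X Y Z W : Type*} (R : Set (X × Set Y))
    (S : Set (Y × Set Z)) {T : Set (Z × Set W)} (hT : unionClosed T) :
    pelegComp R (pelegComp S T) ⊆ pelegComp (pelegComp R S) T := by
  rintro ⟨a, _⟩ ⟨B, hB, h, hh, rfl⟩
  choose! D hD g hg hgD using hh
  refine ⟨_, ⟨B, hB, D, hD, rfl⟩, fun c => ⋃ b ∈ {b ∈ B | c ∈ D b}, g b c, ?_, ?_⟩
  · intro c hc
    obtain ⟨b, hb, hcb⟩ := mem_iUnion₂.1 hc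
    exact hT.biUnion_mem ⟨b, hb, hcb⟩ fun b' hb' => hg b' hb'.1 c hb'.2
  · rw [iUnion₂_congr hgD]
    exact biUnion_biUnion_swap B D g

theorem peleg_assoc_of_unionClosed {X Y Z W : Type*} (R : Set (X × Set Y))
    (S : Set (Y × Set Z)) (T : Set (Z × Set W)) (hT : unionClosed T) :
    pelegComp (pelegComp R S) T = pelegComp R (pelegComp S T) :=
  (pelegComp_pelegComp_subset R S T).antisymm (pelegComp_subset_pelegComp_pelegComp R S hT)
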